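/- For every natural number k ≥ 5, the minimum distance of the code L_k^+ is 6: every nonzero codeword c ·ᵥ G_{L_k^+} with c ∈ 𝔽₂^k, c ≠ 0, has Hamming weight at least 6, and some nonzero codeword has Hamming weight exactly 6. -/

import Mathlib

open Matrix

/-- The k×k matrix over 𝔽₂ with 0 on the diagonal and 1 off the diagonal. -/
def Gmat (k : ℕ) : Matrix (Fin k) (Fin k) (ZMod 2) :=
  fun i j => if i = j then 0 else 1

/-- Generator matrix of the code `L_k^+`: the block matrix `[I_k | G_k | I_k]`. -/
def GLkp (k : ℕ) : Matrix (Fin k) (Fin k ⊕ Fin k ⊕ Fin k) (ZMod 2) :=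
  Matrix.fromCols 1 (Matrix.fromCols (Gmat k) 1)

/-- Hamming weight: the number of nonzero coordinates of a vector. -/
def wt {n : Type*} [Fintype n] (v : n → ZMod 2) : ℕ :=
  (Finset.univ.filter fun j => v j ≠ 0).card

/-!
The codeword of `c` is `(c, s𝟙 + c, c)`, where `s = ∑ cᵢ` is the parity of the weight `w` of `c`.
If `w` is even, the middle block is `c` and the codeword has weight `3w ≥ 6`; if `w` is odd, it is
the complement of `c` and the weight is `2w + (k - w) = k + w ≥ 6`. Every `c` of weight 2 gives a
codeword of weight exactly 6.
-/

open Finset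

section HammingWeight

variable {n : Type*} [Fintype n]

lemma wt_eq_zero_iff {v : n → ZMod 2} : wt v = 0 ↔ v = 0 := by
  simp [wt, funext_iff]

lemma wt_sumElim {m : Type*} [Fintype m] (u : m → ZMod 2) (v : n → ZMod 2) :
    wt (Sum.elim u v) = wt u + wt v := by
  simp only [wt, card_filter, Fintype.sum_sum_type, Sum.elim_inl, Sum.elim_inr]
  congr

lemma sum_eq_wt (v : n → ZMod 2) : ∑ i, v i = (wt v : ZMod 2) := by
  rw [wt, card_filter, Nat.cast_sum]
  refine sum_congr rfl fun i _ => ?_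
  generalize v i = x
  fin_cases x <;> rfl

lemma wt_add_wt_one_add (v : n → ZMod 2) :
    wt v + wt (fun j => 1 + v j) = Fintype.card n := by
  have hcompl : ∀ j, 1 + v j ≠ 0 ↔ ¬ v j ≠ 0 := fun j => by
    generalize v j = x
    revert x
    decide
  simp only [wt, hcompl]
  exact card_filter_add_card_filter_not _

lemma wt_indicator [DecidableEq n] (s : Finset n) :
    wt (fun j => if j ∈ s then 1 else 0 : n → ZMod 2) = #s := by
  simp [wt]

end HammingWeight

lemma vecMul_Gmat {k : ℕ} (c : Fin k → ZMod 2) :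
    c ᵥ* Gmat k = fun j => (∑ i, c i) + c j := by
  funext j
  have hterm : ∀ i, c i * Gmat k i j = c i + if i = j then c i else 0 := fun i => by
    by_cases h : i = j <;> simp [Gmat, h, CharTwo.add_self_eq_zero]
  simp only [vecMul, dotProduct, hterm, sum_add_distrib, sum_ite_eq', mem_univ, if_true]

lemma wt_vecMul_GLkp {k : ℕ} (c : Fin k → ZMod 2) :
    wt (c ᵥ* GLkp k) = 2 * wt c + wt (fun j => (wt c : ZMod 2) + c j) := by
  rw [GLkp, vecMul_fromCols, vecMul_fromCols, vecMul_one, wt_sumElim, wt_sumElim,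
    vecMul_Gmat, sum_eq_wt]
  ring

lemma wt_vecMul_GLkp_of_even {k : ℕ} {c : Fin k → ZMod 2} (h : Even (wt c)) :
    wt (c ᵥ* GLkp k) = 3 * wt c := by
  simp only [wt_vecMul_GLkp, (ZMod.natCast_eq_zero_iff_even).mpr h, zero_add]
  ring

lemma wt_vecMul_GLkp_of_odd {k : ℕ} {c : Fin k → ZMod 2} (h : Odd (wt c)) :
    wt (c ᵥ* GLkp k) = k + wt c := by
  have hcompl := wt_add_wt_one_add c
  rw [Fintype.card_fin] at hcompl
  rw [wt_vecMul_GLkp, (ZMod.natCast_eq_one_iff_odd).mpr h]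
  omega

/-- For `k ≥ 5`, the minimum distance of `L_k^+` is 6. -/
theorem minDistance_Lkp_eq_six (k : ℕ) (hk : 5 ≤ k) :
    (∀ c : Fin k → ZMod 2, c ≠ 0 → 6 ≤ wt (Matrix.vecMul c (GLkp k))) ∧
    (∃ c : Fin k → ZMod 2, c ≠ 0 ∧ wt (Matrix.vecMul c (GLkp k)) = 6) := by
  refine ⟨fun c hc => ?_, ?_⟩
  · have hpos : wt c ≠ 0 := wt_eq_zero_iff.not.mpr hc
    rcases Nat.even_or_odd (wt c) with heven | hodd
    · rw [wt_vecMul_GLkp_of_even heven]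
      obtain ⟨m, hm⟩ := heven
      omega
    · rw [wt_vecMul_GLkp_of_odd hodd]
      omega
  · obtain ⟨s, -, hs⟩ := exists_subset_card_eq (s := (univ : Finset (Fin k))) (n := 2)
      (by rw [card_univ, Fintype.card_fin]; omega)
    have hwt : wt (fun j => if j ∈ s then 1 else 0 : Fin k → ZMod 2) = 2 := by
      rw [wt_indicator, hs]
    refine ⟨_, wt_eq_zero_iff.not.mp (by rw [hwt]; decide), ?_⟩
    rw [wt_vecMul_GLkp_of_even (by rw [hwt]; decide), hwt]
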